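/- arXiv:2011.10539 — 2 statements merged into one kernel-verified Lean document; each statement's English description precedes it below -/
import Mathlib

section
/- Let R > 1 and R^{-1/3} ≤ σ ≤ 1. Suppose w ∈ ℝ³ satisfies |w₁| ≤ R^{-1/3}σ², |w₂ - 2c w₁| ≤ R^{-2/3} and |w₃ - 3c w₂ + 3c² w₁| ≤ R^{-1} for some c (i.e. w lies in θ̃_c and has first coordinate of size at most R^{-1/3}σ²). Then |w₂ - 2c w₁| ≤ 7 R^{-2/3}σ, i.e. w lies in 7·Θ(σ,c), where Θ(σ,c) = {w : |w₁| ≤ R^{-1/3}σ², |w₂-2cw₁| ≤ R^{-2/3}σ, |w₃-3cw₂+3c²w₁| ≤ R^{-1}}, provided additionally that w can be written as w = (x, y+2x(s-c), z+3y(s-c)+3x(s-c)²) with (x,y,z) ∈ Θ(σ,0) and s ∈ [0,1]. -/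
/-!
Write `a = R^{-1/3}` and `t = s - c`. Subtracting the bound on `z` from the third `θ̃_c`
condition gives `|y t + x t²| ≤ (2/3) a³`. If `|t| σ ≤ a`, the triangle inequality alone gives
`|y + 2 x t| ≤ a² σ + 2 a σ² |t| ≤ 3 a² σ`. Otherwise `t` is large, and the identity
`(y + 2 x t) t = 2 (y t + x t²) - y t` gives `|y + 2 x t| |t| ≤ (4/3) a³ + a² σ |t| ≤ 3 a² σ |t|`.
-/

theorem abs_add_two_mul_le_of_cubic_bounds {a σ x y z t : ℝ} (ha : 0 < a)
    (hx : |x| ≤ a * σ ^ 2) (hy : |y| ≤ a ^ 2 * σ) (hz : |z| ≤ a ^ 3)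
    (h : |z + 3 * y * t + 3 * x * t ^ 2| ≤ a ^ 3) :
    |y + 2 * x * t| ≤ 3 * a ^ 2 * σ := by
  have hσ : 0 ≤ σ := nonneg_of_mul_nonneg_right ((abs_nonneg y).trans hy) (by positivity)
  have hquad : |y * t + x * t ^ 2| ≤ 2 / 3 * a ^ 3 := by
    have hsub := abs_sub (z + 3 * y * t + 3 * x * t ^ 2) z
    rw [show z + 3 * y * t + 3 * x * t ^ 2 - z = 3 * (y * t + x * t ^ 2) by ring, abs_mul,
      abs_of_pos three_pos] at hsub
    linarith
  rcases le_or_gt (|t| * σ) a with hsmall | hlarge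
  · calc |y + 2 * x * t| ≤ |y| + 2 * |x| * |t| := by
          simpa [abs_mul] using abs_add_le y (2 * x * t)
      _ ≤ a ^ 2 * σ + 2 * (a * σ ^ 2) * |t| := by gcongr
      _ = a ^ 2 * σ + 2 * (a * σ) * (|t| * σ) := by ring
      _ ≤ a ^ 2 * σ + 2 * (a * σ) * a := by gcongr
      _ = 3 * a ^ 2 * σ := by ring
  · have ht : 0 < |t| := pos_of_mul_pos_left (ha.trans hlarge) hσ
    refine le_of_mul_le_mul_right ?_ ht
    have hcube : a ^ 3 ≤ a ^ 2 * σ * |t| :=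
      calc a ^ 3 = a ^ 2 * a := by ring
        _ ≤ a ^ 2 * (|t| * σ) := by gcongr
        _ = a ^ 2 * σ * |t| := by ring
    calc |y + 2 * x * t| * |t| = |2 * (y * t + x * t ^ 2) - y * t| := by
          rw [← abs_mul]; ring_nf
      _ ≤ 2 * |y * t + x * t ^ 2| + |y| * |t| := by
          have := abs_sub (2 * (y * t + x * t ^ 2)) (y * t)
          rwa [abs_mul, abs_mul, abs_two] at this
      _ ≤ 2 * (2 / 3 * a ^ 3) + a ^ 2 * σ * |t| := by gcongr
      _ ≤ 3 * a ^ 2 * σ * |t| := by linarith [hcube, (by positivity : 0 ≤ a ^ 2 * σ * |t|)]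

theorem stmt_1_general (R σ c s x y z : ℝ) (hR : 1 < R)
    -- (x,y,z) ∈ Θ(σ,0)
    (hx : |x| ≤ R ^ (-(1/3) : ℝ) * σ^2)
    (hy : |y| ≤ R ^ (-(2/3) : ℝ) * σ)
    (hz : |z| ≤ R ^ (-1 : ℝ))
    -- C_{(x,y,z)}(s) ∈ θ̃_c
    (h3 : |z + 3*y*(s - c) + 3*x*(s - c)^2| ≤ R ^ (-1 : ℝ)) :
    |y + 2*x*(s - c)| ≤ 7 * R ^ (-(2/3) : ℝ) * σ := by
  have hR₀ : 0 < R := zero_lt_one.trans hR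
  have hpow (n : ℕ) : R ^ (-(n / 3) : ℝ) = (R ^ (-(1/3) : ℝ)) ^ n := by
    rw [← Real.rpow_natCast, ← Real.rpow_mul hR₀.le]
    ring_nf
  have h₂ : R ^ (-(2/3) : ℝ) = (R ^ (-(1/3) : ℝ)) ^ 2 := by exact_mod_cast hpow 2
  have h₃ : R ^ (-1 : ℝ) = (R ^ (-(1/3) : ℝ)) ^ 3 := by
    rw [← hpow 3]; norm_num
  rw [h₂] at hy ⊢
  rw [h₃] at hz h3
  have hbound := abs_add_two_mul_le_of_cubic_bounds (Real.rpow_pos_of_pos hR₀ _) hx hy hz h3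
  linarith [(abs_nonneg y).trans hy]

/-- If `(x,y,z) ∈ Θ(σ,0)`, `s ∈ [0,1]`, and the point `C_{(x,y,z)}(s)` lies in the plank
`θ̃_c`, then its middle coordinate satisfies `|y + 2x(s-c)| ≤ 7 R^{-2/3} σ`, i.e. the point
lies in `7·Θ(σ,c)`. -/
theorem stmt_1 (R σ c s x y z : ℝ) (hR : 1 < R)
    (hσ₁ : R ^ (-(1/3) : ℝ) ≤ σ) (hσ₂ : σ ≤ 1)
    (hs₀ : 0 ≤ s) (hs₁ : s ≤ 1)
    -- (x,y,z) ∈ Θ(σ,0)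
    (hx : |x| ≤ R ^ (-(1/3) : ℝ) * σ^2)
    (hy : |y| ≤ R ^ (-(2/3) : ℝ) * σ)
    (hz : |z| ≤ R ^ (-1 : ℝ))
    -- C_{(x,y,z)}(s) ∈ θ̃_c
    (h1 : |x| ≤ R ^ (-(1/3) : ℝ))
    (h2 : |y + 2*x*(s - c)| ≤ R ^ (-(2/3) : ℝ))
    (h3 : |z + 3*y*(s - c) + 3*x*(s - c)^2| ≤ R ^ (-1 : ℝ)) :
    |y + 2*x*(s - c)| ≤ 7 * R ^ (-(2/3) : ℝ) * σ :=
  stmt_1_general R σ c s x y z hR hx hy hz h3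
end

section
/- If |s - s'| ≤ R^{-1/3}σ^{-1} and R^{-1/3} ≤ σ ≤ 1, then Θ(σ,s) ⊆ 7·Θ(σ,s'), where Θ(σ,s) = {w ∈ ℝ³ : |w₁| ≤ R^{-1/3}σ², |w₂ - 2sw₁| ≤ R^{-2/3}σ, |w₃ - 3sw₂ + 3s²w₁| ≤ R^{-1}} and 7·Θ(σ,s') denotes the set with all three bounds multiplied by 7. -/
/-!
Write `δ = R^{-1/3}` and `t = s - s'`, so that `|t| σ ≤ δ`. Passing from `s` to `s'` changes the
coordinates `(w₁, w₂ - 2sw₁, w₃ - 3sw₂ + 3s²w₁)` unipotently: the second gains `2tw₁` and the third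
gains `3t(w₂ - 2sw₁) + 3t²w₁`. Each cross term `|t| |w₁|`, `|t| |w₂ - 2sw₁|`, `t² |w₁|` is at most the
bound of the coordinate it is added to, whence the factors `1`, `1 + 2` and `1 + 3 + 3 = 7`.
-/

section ShearBounds

variable {δ σ s s' a b c : ℝ}

lemma abs_sub_mul_abs_le (hδ : 0 ≤ δ) (hσ : 0 ≤ σ) (ht : |s - s'| * σ ≤ δ)
    (ha : |a| ≤ δ * σ ^ 2) : |s - s'| * |a| ≤ δ ^ 2 * σ :=
  calc |s - s'| * |a| ≤ |s - s'| * (δ * σ ^ 2) := by gcongr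
    _ = (|s - s'| * σ) * (δ * σ) := by ring
    _ ≤ δ * (δ * σ) := by gcongr
    _ = δ ^ 2 * σ := by ring

lemma sq_abs_sub_mul_abs_le (hδ : 0 ≤ δ) (hσ : 0 ≤ σ) (ht : |s - s'| * σ ≤ δ)
    (ha : |a| ≤ δ * σ ^ 2) : |s - s'| ^ 2 * |a| ≤ δ ^ 3 :=
  calc |s - s'| ^ 2 * |a| ≤ |s - s'| ^ 2 * (δ * σ ^ 2) := by gcongr
    _ = (|s - s'| * σ) ^ 2 * δ := by ring
    _ ≤ δ ^ 2 * δ := by gcongr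
    _ = δ ^ 3 := by ring

lemma abs_sub_two_mul_le (hδ : 0 ≤ δ) (hσ : 0 ≤ σ) (ht : |s - s'| * σ ≤ δ)
    (ha : |a| ≤ δ * σ ^ 2) (hb : |b - 2 * s * a| ≤ δ ^ 2 * σ) :
    |b - 2 * s' * a| ≤ 3 * (δ ^ 2 * σ) := by
  have hta := abs_sub_mul_abs_le hδ hσ ht ha
  calc |b - 2 * s' * a| = |(b - 2 * s * a) + 2 * ((s - s') * a)| := by ring_nf
    _ ≤ |b - 2 * s * a| + 2 * (|s - s'| * |a|) := by
        grw [abs_add_le, abs_mul, abs_mul, abs_two]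
    _ ≤ 3 * (δ ^ 2 * σ) := by linarith

lemma abs_sub_three_mul_add_le (hδ : 0 ≤ δ) (hσ : 0 ≤ σ) (ht : |s - s'| * σ ≤ δ)
    (ha : |a| ≤ δ * σ ^ 2) (hb : |b - 2 * s * a| ≤ δ ^ 2 * σ)
    (hc : |c - 3 * s * b + 3 * s ^ 2 * a| ≤ δ ^ 3) :
    |c - 3 * s' * b + 3 * s' ^ 2 * a| ≤ 7 * δ ^ 3 := by
  have htb : |s - s'| * |b - 2 * s * a| ≤ δ ^ 3 :=
    calc |s - s'| * |b - 2 * s * a| ≤ |s - s'| * (δ ^ 2 * σ) := by gcongr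
      _ = (|s - s'| * σ) * δ ^ 2 := by ring
      _ ≤ δ * δ ^ 2 := by gcongr
      _ = δ ^ 3 := by ring
  have hta := sq_abs_sub_mul_abs_le hδ hσ ht ha
  calc |c - 3 * s' * b + 3 * s' ^ 2 * a|
        = |(c - 3 * s * b + 3 * s ^ 2 * a) + 3 * ((s - s') * (b - 2 * s * a))
            + 3 * ((s - s') ^ 2 * a)| := by ring_nf
    _ ≤ |c - 3 * s * b + 3 * s ^ 2 * a| + 3 * (|s - s'| * |b - 2 * s * a|)
          + 3 * (|s - s'| ^ 2 * |a|) := by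
        grw [abs_add_le, abs_add_le, abs_mul, abs_mul, abs_mul, abs_mul, abs_pow, abs_of_pos (three_pos : (0 : ℝ) < 3)]
    _ ≤ 7 * δ ^ 3 := by linarith

end ShearBounds

theorem stmt_2_general (R σ s s' : ℝ) (hR : 1 < R)
    (hσ₁ : R ^ (-(1/3) : ℝ) ≤ σ)
    (hss' : |s - s'| ≤ R ^ (-(1/3) : ℝ) * σ⁻¹) :
    {w : ℝ × ℝ × ℝ | |w.1| ≤ R ^ (-(1/3) : ℝ) * σ^2 ∧
        |w.2.1 - 2*s*w.1| ≤ R ^ (-(2/3) : ℝ) * σ ∧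
        |w.2.2 - 3*s*w.2.1 + 3*s^2*w.1| ≤ R ^ (-1 : ℝ)} ⊆
      {w : ℝ × ℝ × ℝ | |w.1| ≤ 7 * (R ^ (-(1/3) : ℝ) * σ^2) ∧
        |w.2.1 - 2*s'*w.1| ≤ 7 * (R ^ (-(2/3) : ℝ) * σ) ∧
        |w.2.2 - 3*s'*w.2.1 + 3*s'^2*w.1| ≤ 7 * (R ^ (-1 : ℝ))} := by
  rintro w ⟨ha, hb, hc⟩
  set δ := R ^ (-(1/3) : ℝ)
  have hR0 : 0 ≤ R := by linarith
  have hδ : 0 < δ := Real.rpow_pos_of_pos (by linarith) _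
  have hσ : 0 < σ := hδ.trans_le hσ₁
  have hδ2 : R ^ (-(2/3) : ℝ) = δ ^ 2 := by rw [← Real.rpow_mul_natCast hR0]; norm_num
  have hδ3 : R ^ (-1 : ℝ) = δ ^ 3 := by rw [← Real.rpow_mul_natCast hR0]; norm_num
  have ht : |s - s'| * σ ≤ δ := by
    simpa [hσ.ne'] using mul_le_mul_of_nonneg_right hss' hσ.le
  rw [hδ2] at hb ⊢
  rw [hδ3] at hc ⊢
  refine ⟨ha.trans (le_mul_of_one_le_left (by positivity) (by norm_num)), ?_, ?_⟩
  · exact (abs_sub_two_mul_le hδ.le hσ.le ht ha hb).trans (by gcongr; norm_num)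
  · exact abs_sub_three_mul_add_le hδ.le hσ.le ht ha hb hc

/-- If `|s - s'| ≤ R^{-1/3}σ⁻¹` and `R^{-1/3} ≤ σ ≤ 1`, then `Θ(σ,s) ⊆ 7·Θ(σ,s')`. -/
theorem stmt_2 (R σ s s' : ℝ) (hR : 1 < R)
    (hσ₁ : R ^ (-(1/3) : ℝ) ≤ σ) (hσ₂ : σ ≤ 1)
    (hss' : |s - s'| ≤ R ^ (-(1/3) : ℝ) * σ⁻¹) :
    {w : ℝ × ℝ × ℝ | |w.1| ≤ R ^ (-(1/3) : ℝ) * σ^2 ∧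
        |w.2.1 - 2*s*w.1| ≤ R ^ (-(2/3) : ℝ) * σ ∧
        |w.2.2 - 3*s*w.2.1 + 3*s^2*w.1| ≤ R ^ (-1 : ℝ)} ⊆
      {w : ℝ × ℝ × ℝ | |w.1| ≤ 7 * (R ^ (-(1/3) : ℝ) * σ^2) ∧
        |w.2.1 - 2*s'*w.1| ≤ 7 * (R ^ (-(2/3) : ℝ) * σ) ∧
        |w.2.2 - 3*s'*w.2.1 + 3*s'^2*w.1| ≤ 7 * (R ^ (-1 : ℝ))} :=
  stmt_2_general R σ s s' hR hσ₁ hss'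
end
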